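/- arXiv:1306.5391 — 2 statements merged into one kernel-verified Lean document; each statement's English description precedes it below -/
import Mathlib

section
/- In a directed graph with dart capacities, the value of the minimum st-cut equals the value of the maximum st-flow (Max-flow Min-cut theorem for the dart/asymmetric-capacity setting). -/
open Finset

variable {V D F : Type}

/-- `p` is a path of darts from `u` to `v`. -/
def IsPathFrom (head tail : D → V) : V → V → List D → Prop
  | u, v, [] => u = v
  | u, v, d :: p => tail d = u ∧ IsPathFrom head tail (head d) v p

/-- The vertices visited by a path starting at `u`. -/
def pathVertices (head : D → V) (u : V) (p : List D) : List V := u :: p.map head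

/-- A path (or cycle) is residual iff every dart has strictly positive (residual) capacity. -/
def IsResidual (c : D → ℝ) (p : List D) : Prop := ∀ d ∈ p, 0 < c d

/-- Net flow into a vertex: sum of flow over darts whose head is `v`. -/
def netInto [Fintype D] [DecidableEq V] (head : D → V) (f : D → ℝ) (v : V) : ℝ :=
  ∑ d ∈ Finset.univ.filter (fun d => head d = v), f d

/-- `f` is a flow w.r.t. capacities `c`: antisymmetric, capacity-respecting,
balanced at every vertex other than `s` and `t`. -/
def IsFlow [Fintype D] [DecidableEq V] (head tail : D → V) (rev : D → D)
    (c f : D → ℝ) (s t : V) : Prop :=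
  (∀ d, f (rev d) = - f d) ∧ (∀ d, f d ≤ c d) ∧
  ∀ v, v ≠ s → v ≠ t → netInto head f v = 0

/-- The value of a flow: net flow entering the sink `t`. -/
def flowValue [Fintype D] [DecidableEq V] (head : D → V) (f : D → ℝ) (t : V) : ℝ :=
  netInto head f t

/-- An -cut: a set of darts meeting every -to- path. -/
def IsCut [DecidableEq D] (head tail : D → V) (s t : V) (C : Finset D) : Prop :=
  ∀ p, IsPathFrom head tail s t p → ∃ d ∈ p, d ∈ C

/-- The value of a cut: total capacity of its darts. -/
def cutValue [DecidableEq D] (c : D → ℝ) (C : Finset D) : ℝ := ∑ d ∈ C, c d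

/-! The value of a flow is its net flow out of any vertex set containing `s` but not `t`, in
particular out of the set of vertices reachable from `s` without crossing a given cut; this gives
weak duality. For a maximum flow, `t` is not reachable from `s` through darts with residual
capacity, since otherwise adding a small multiple of the unit flow along such a path would
increase the value. The darts leaving the residually reachable set then form a cut saturated by
the flow, so its value is the flow value. -/

namespace IsPathFrom

variable {head tail : D → V}

theorem append {u v w : V} {p q : List D} (hp : IsPathFrom head tail u v p)
    (hq : IsPathFrom head tail v w q) : IsPathFrom head tail u w (p ++ q) := by
  induction p generalizing u with
  | nil => exact (show u = v from hp) ▸ hq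
  | cons d p ih => exact ⟨hp.1, ih hp.2⟩

theorem concat {u v : V} {p : List D} (hp : IsPathFrom head tail u v p) (d : D)
    (hd : tail d = v) : IsPathFrom head tail u (head d) (p ++ [d]) :=
  hp.append ⟨hd, rfl⟩

end IsPathFrom

section Cuts

variable (head tail : D → V)

def exitDarts [Fintype D] (P : V → Prop) [DecidablePred P] : Finset D :=
  univ.filter fun d => P (tail d) ∧ ¬ P (head d)

def ReachableVia (Q : D → Prop) (s v : V) : Prop :=
  ∃ p, IsPathFrom head tail s v p ∧ ∀ d ∈ p, Q d

variable {head tail}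

theorem reachableVia_refl (Q : D → Prop) (s : V) : ReachableVia head tail Q s s :=
  ⟨[], rfl, by simp⟩

variable [Fintype D]

theorem IsPathFrom.exists_mem_exitDarts (P : V → Prop) [DecidablePred P] {u v : V}
    {p : List D} (hp : IsPathFrom head tail u v p) (hu : P u) (hv : ¬ P v) :
    ∃ d ∈ p, d ∈ exitDarts head tail P := by
  induction p generalizing u with
  | nil => exact absurd ((show u = v from hp) ▸ hu) hv
  | cons d p ih =>
    by_cases hd : P (head d)
    · obtain ⟨e, he, he'⟩ := ih hp.2 hd
      exact ⟨e, List.mem_cons_of_mem _ he, he'⟩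
    · exact ⟨d, List.mem_cons_self, by simp [exitDarts, hp.1, hu, hd]⟩

theorem isCut_exitDarts [DecidableEq D] {P : V → Prop} [DecidablePred P] {s t : V}
    (hs : P s) (ht : ¬ P t) : IsCut head tail s t (exitDarts head tail P) :=
  fun _ hp => hp.exists_mem_exitDarts P hs ht

theorem not_of_mem_exitDarts_reachableVia {Q : D → Prop} {s : V}
    [DecidablePred (ReachableVia head tail Q s)] {d : D}
    (hd : d ∈ exitDarts head tail (ReachableVia head tail Q s)) : ¬ Q d := by
  obtain ⟨⟨p, hp, hpQ⟩, hout⟩ := (mem_filter.1 hd).2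
  intro hQ
  refine hout ⟨p ++ [d], hp.concat d rfl, fun e he => ?_⟩
  rcases List.mem_append.1 he with he | he
  · exact hpQ e he
  · exact List.mem_singleton.1 he ▸ hQ

end Cuts

theorem sum_eq_zero_of_antisymm {rev : D → D} (hrev : ∀ d, rev (rev d) = d) {f : D → ℝ}
    (hf : ∀ d, f (rev d) = - f d) {S : Finset D} (hS : ∀ d ∈ S, rev d ∈ S) :
    ∑ d ∈ S, f d = 0 :=
  sum_involution (fun d _ => rev d) (fun d _ => by rw [hf]; ring)
    (fun d _ hfd hd => hfd (by linarith [hf d, hd ▸ hf d])) hS (fun d _ => hrev d)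

section PathFlow

variable [DecidableEq D] (rev : D → D)

def pathFlow : List D → D → ℝ
  | [] => 0
  | e :: p => pathFlow p + Pi.single e 1 - Pi.single (rev e) 1

variable {rev}

theorem pathFlow_rev (hrev : ∀ d, rev (rev d) = d) (p : List D) (d : D) :
    pathFlow rev p (rev d) = - pathFlow rev p d := by
  induction p with
  | nil => simp [pathFlow]
  | cons e p ih =>
    simp only [pathFlow, Pi.sub_apply, Pi.add_apply, ih, Pi.single_apply,
      Function.Involutive.eq_iff hrev, hrev]
    ring

theorem pathFlow_le_length (p : List D) (d : D) : pathFlow rev p d ≤ p.length := by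
  induction p with
  | nil => simp [pathFlow]
  | cons e p ih =>
    simp only [pathFlow, Pi.sub_apply, Pi.add_apply, Pi.single_apply, List.length_cons,
      Nat.cast_succ]
    split_ifs <;> linarith

theorem pathFlow_nonpos_of_notMem {p : List D} {d : D} (hd : d ∉ p) :
    pathFlow rev p d ≤ 0 := by
  induction p with
  | nil => simp [pathFlow]
  | cons e p ih =>
    obtain ⟨hde, hdp⟩ := not_or.1 (List.mem_cons.not.1 hd)
    rw [pathFlow, Pi.sub_apply, Pi.add_apply, Pi.single_eq_of_ne hde, add_zero,
      Pi.single_apply]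
    split_ifs <;> linarith [ih hdp]

end PathFlow

section Flows

variable [Fintype D] [DecidableEq V] {head tail : D → V} {rev : D → D}

theorem netInto_add_smul (f g : D → ℝ) (ε : ℝ) (v : V) :
    netInto head (f + ε • g) v = netInto head f v + ε * netInto head g v := by
  simp only [netInto, Pi.add_apply, Pi.smul_apply, smul_eq_mul, sum_add_distrib, mul_sum]

theorem IsFlow.flowValue_eq_sum_exitDarts [Fintype V] (hrev : ∀ d, rev (rev d) = d)
    (hheadrev : ∀ d, head (rev d) = tail d) {c f : D → ℝ} {s t : V}
    (hf : IsFlow head tail rev c f s t) {P : V → Prop} [DecidablePred P]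
    (hs : P s) (ht : ¬ P t) :
    flowValue head f t = ∑ d ∈ exitDarts head tail P, f d := by
  have htailrev : ∀ d, tail (rev d) = head d := fun d => by rw [← hheadrev, hrev]
  have hbalanced : flowValue head f t = ∑ v ∈ univ.filter (¬ P ·), netInto head f v := by
    refine (sum_eq_single_of_mem t (by simpa using ht) fun v hv hvt => ?_).symm
    exact hf.2.2 v (by rintro rfl; exact (mem_filter.1 hv).2 hs) hvt
  have hinside : ∑ d ∈ univ.filter (fun d => ¬ P (head d) ∧ ¬ P (tail d)), f d = 0 :=
    sum_eq_zero_of_antisymm hrev hf.1 fun d hd => by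
      simp only [mem_filter, mem_univ, true_and, hheadrev, htailrev] at hd ⊢
      exact hd.symm
  unfold netInto at hbalanced
  rw [hbalanced, sum_fiberwise_eq_sum_filter,
    ← sum_filter_add_sum_filter_not _ (fun d => P (tail d)), filter_filter, filter_filter]
  simp only [mem_filter, mem_univ, true_and]
  rw [hinside, add_zero]
  exact sum_congr (by ext; simp [exitDarts, and_comm]) fun _ _ => rfl

variable [DecidableEq D]

theorem IsFlow.flowValue_le_cutValue [Fintype V] (hrev : ∀ d, rev (rev d) = d)
    (hheadrev : ∀ d, head (rev d) = tail d) {c f : D → ℝ} (hc : ∀ d, 0 ≤ c d) {s t : V}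
    (hf : IsFlow head tail rev c f s t) {C : Finset D} (hC : IsCut head tail s t C) :
    flowValue head f t ≤ cutValue c C := by
  classical
  have ht : ¬ ReachableVia head tail (· ∉ C) s t := fun ⟨p, hp, hpC⟩ => by
    obtain ⟨d, hd, hdC⟩ := hC p hp
    exact hpC d hd hdC
  have hexit : exitDarts head tail (ReachableVia head tail (· ∉ C) s) ⊆ C := fun d hd =>
    not_not.1 (not_of_mem_exitDarts_reachableVia (Q := (· ∉ C)) hd)
  calc flowValue head f t
      = ∑ d ∈ exitDarts head tail (ReachableVia head tail (· ∉ C) s), f d :=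
        hf.flowValue_eq_sum_exitDarts hrev hheadrev (reachableVia_refl _ s) ht
    _ ≤ ∑ d ∈ exitDarts head tail (ReachableVia head tail (· ∉ C) s), c d :=
        sum_le_sum fun d _ => hf.2.1 d
    _ ≤ cutValue c C := sum_le_sum_of_subset_of_nonneg hexit fun d _ _ => hc d

theorem netInto_pathFlow (hheadrev : ∀ d, head (rev d) = tail d) {u w : V} {p : List D}
    (hp : IsPathFrom head tail u w p) (v : V) :
    netInto head (pathFlow rev p) v = (if v = w then 1 else 0) - (if v = u then 1 else 0) := by
  induction p generalizing u with
  | nil =>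
    obtain rfl : u = w := hp
    simp [netInto, pathFlow]
  | cons e p ih =>
    obtain ⟨rfl, hp⟩ := hp
    simp only [netInto, pathFlow, Pi.sub_apply, Pi.add_apply, sum_add_distrib, sum_sub_distrib,
      sum_pi_single', mem_filter, mem_univ, true_and, hheadrev] at ih ⊢
    rw [ih hp]
    simp only [eq_comm (a := head e), eq_comm (a := tail e)]
    ring

theorem IsFlow.add_smul_pathFlow (hrev : ∀ d, rev (rev d) = d)
    (hheadrev : ∀ d, head (rev d) = tail d) {c f : D → ℝ} {s t : V}
    (hf : IsFlow head tail rev c f s t) (hst : s ≠ t) {p : List D}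
    (hp : IsPathFrom head tail s t p) {ε : ℝ} (hcap : ∀ d, ε * pathFlow rev p d ≤ c d - f d) :
    IsFlow head tail rev c (f + ε • pathFlow rev p) s t ∧
      flowValue head (f + ε • pathFlow rev p) t = flowValue head f t + ε := by
  refine ⟨⟨fun d => ?_, fun d => ?_, fun v hvs hvt => ?_⟩, ?_⟩
  · simp only [Pi.add_apply, Pi.smul_apply, smul_eq_mul, hf.1, pathFlow_rev hrev]
    ring
  · simp only [Pi.add_apply, Pi.smul_apply, smul_eq_mul]
    linarith [hcap d]
  · simp [netInto_add_smul, netInto_pathFlow hheadrev hp, hf.2.2 v hvs hvt, hvs, hvt]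
  · simp [flowValue, netInto_add_smul, netInto_pathFlow hheadrev hp, hst.symm]

theorem IsFlow.exists_flowValue_lt (hrev : ∀ d, rev (rev d) = d)
    (hheadrev : ∀ d, head (rev d) = tail d) {c f : D → ℝ} {s t : V}
    (hf : IsFlow head tail rev c f s t) (hst : s ≠ t) {p : List D}
    (hp : IsPathFrom head tail s t p) (hres : ∀ d ∈ p, f d < c d) :
    ∃ g, IsFlow head tail rev c g s t ∧ flowValue head f t < flowValue head g t := by
  have hlen : (0 : ℝ) < p.length := by
    rcases p with _ | ⟨d, p⟩
    · exact absurd hp hst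
    · simp only [List.length_cons]; positivity
  obtain ⟨d₀, hd₀, hmin⟩ := p.toFinset.exists_min_image (fun d => c d - f d)
    (List.toFinset_nonempty_iff p |>.2 (List.ne_nil_of_length_pos (by exact_mod_cast hlen)))
  have hδ : 0 < c d₀ - f d₀ := sub_pos.2 (hres d₀ (List.mem_toFinset.1 hd₀))
  -- `p` may repeat a dart, so `pathFlow rev p` can reach `p.length` on it.
  set ε := (c d₀ - f d₀) / p.length
  have hε : 0 < ε := div_pos hδ hlen
  have hcap : ∀ d, ε * pathFlow rev p d ≤ c d - f d := fun d => by
    by_cases hd : d ∈ p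
    · calc ε * pathFlow rev p d ≤ ε * p.length :=
            mul_le_mul_of_nonneg_left (pathFlow_le_length p d) hε.le
        _ = c d₀ - f d₀ := div_mul_cancel₀ _ hlen.ne'
        _ ≤ c d - f d := hmin d (List.mem_toFinset.2 hd)
    · exact (mul_nonpos_of_nonneg_of_nonpos hε.le (pathFlow_nonpos_of_notMem hd)).trans
        (sub_nonneg.2 (hf.2.1 d))
  obtain ⟨hg, hgv⟩ := hf.add_smul_pathFlow hrev hheadrev hst hp hcap
  exact ⟨_, hg, by linarith⟩

theorem IsFlow.exists_isCut_cutValue_eq [Fintype V] (hrev : ∀ d, rev (rev d) = d)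
    (hheadrev : ∀ d, head (rev d) = tail d) {c f : D → ℝ} {s t : V}
    (hf : IsFlow head tail rev c f s t) (hst : s ≠ t)
    (hmax : ∀ g, IsFlow head tail rev c g s t → flowValue head g t ≤ flowValue head f t) :
    ∃ C, IsCut head tail s t C ∧ cutValue c C = flowValue head f t := by
  classical
  have ht : ¬ ReachableVia head tail (fun d => f d < c d) s t := fun ⟨p, hp, hres⟩ => by
    obtain ⟨g, hg, hlt⟩ := hf.exists_flowValue_lt hrev hheadrev hst hp hres
    exact (hmax g hg).not_gt hlt
  refine ⟨_, isCut_exitDarts (reachableVia_refl _ s) ht, ?_⟩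
  rw [cutValue, hf.flowValue_eq_sum_exitDarts hrev hheadrev (reachableVia_refl _ s) ht]
  exact sum_congr rfl fun d hd =>
    le_antisymm (not_lt.1 (not_of_mem_exitDarts_reachableVia (Q := fun d => f d < c d) hd))
      (hf.2.1 d)

end Flows

/-- **Max-flow Min-cut** in the dart / asymmetric-capacity setting: the value of the
minimum `st`-cut equals the value of the maximum `st`-flow. -/
theorem maxflow_eq_mincut [Fintype V] [Fintype D] [DecidableEq V] [DecidableEq D]
    (head tail : D → V) (rev : D → D)
    (hrev : ∀ d, rev (rev d) = d) (hheadrev : ∀ d, head (rev d) = tail d)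
    (c : D → ℝ) (hc : ∀ d, 0 ≤ c d) (s t : V)
    (vmax vmin : ℝ)
    (hmax : IsGreatest {v | ∃ f, IsFlow head tail rev c f s t ∧ flowValue head f t = v} vmax)
    (hmin : IsLeast {v | ∃ C, IsCut head tail s t C ∧ cutValue c C = v} vmin) :
    vmax = vmin := by
  obtain ⟨⟨f, hf, rfl⟩, hfmax⟩ := hmax
  obtain ⟨⟨C, hC, rfl⟩, hCmin⟩ := hmin
  have hst : s ≠ t := by
    rintro rfl
    obtain ⟨d, hd, -⟩ := hC [] rfl
    exact List.not_mem_nil hd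
  obtain ⟨C', hC', hC'v⟩ :=
    hf.exists_isCut_cutValue_eq hrev hheadrev hst fun g hg => hfmax ⟨g, hg, rfl⟩
  exact le_antisymm (hf.flowValue_le_cutValue hrev hheadrev hc hC) (hC'v ▸ hCmin ⟨C', hC', rfl⟩)
end

section
/- If f is a flow with respect to capacities c and c_f denotes the residual capacities defined by c_f[d] = c[d] - f[d], then f' is a flow with respect to c_f of value v if and only if f + f' is a flow with respect to c of value |f| + v. -/
open Finset

variable {V D F : Type}

/-- If f is a flow w.r.t. c, then f' is a flow of value v w.r.t. the residual
capacities c_f = c - f if and only if f + f' is a flow of value |f| + v w.r.t. c. -/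
theorem residual_flow_iff [Fintype V] [Fintype D] [DecidableEq V] [DecidableEq D]
    (head tail : D → V) (rev : D → D)
    (hrev : ∀ d, rev (rev d) = d) (hheadrev : ∀ d, head (rev d) = tail d)
    (c f f' : D → ℝ) (s t : V) (v : ℝ)
    (hf : IsFlow head tail rev c f s t) :
    (IsFlow head tail rev (fun d => c d - f d) f' s t ∧ flowValue head f' t = v) ↔
      (IsFlow head tail rev c (fun d => f d + f' d) s t ∧
        flowValue head (fun d => f d + f' d) t = flowValue head f t + v) := by

  obtain ⟨hfa, hfc, hfb⟩ := hf
  have hadd : ∀ g g' : D → ℝ, ∀ w, netInto head (fun d => g d + g' d) w =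
      netInto head g w + netInto head g' w := by
    intro g g' w
    simp [netInto, Finset.sum_add_distrib]
  constructor
  · rintro ⟨⟨ha, hc, hb⟩, hv⟩
    refine ⟨⟨fun d => by simp [hfa d, ha d]; ring, fun d => by have h := hc d; dsimp only at h ⊢; linarith, ?_⟩, ?_⟩
    · intro w hws hwt
      rw [hadd, hfb w hws hwt, hb w hws hwt, add_zero]
    · simp only [flowValue] at *
      rw [hadd, hv]
  · rintro ⟨⟨ha, hc, hb⟩, hv⟩
    refine ⟨⟨fun d => ?_, fun d => by have h := hc d; dsimp only at h ⊢; linarith, ?_⟩, ?_⟩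
    · have := ha d
      simp only [hfa d] at this
      linarith
    · intro w hws hwt
      have := hb w hws hwt
      rw [hadd, hfb w hws hwt] at this
      linarith
    · simp only [flowValue] at *
      rw [hadd] at hv
      linarith
end
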